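/- Assume in addition β(0) = 1. Setting S := Σ_{k≥0, u≥0} β(k+u+1)²·Xᵏ·Yᵘ and B₀(X) := Σ_{l≥0} β(l)²·Xˡ in the ring of formal power series in two variables X, Y over ℝ, one has (1 − (q⁻¹λ² − 1)·q⁻¹·Y + (q⁻¹λ² − 1)·q⁻²·Y² − q⁻³·Y³)·X²·S = B₀(X)·(Y + X + q⁻¹·XY − q⁻²λ²·XY + q⁻³·X²Y²) − (X + Y + β(1)²·XY + q⁻¹·XY − q⁻²λ²·XY). -/

import Mathlib

/-
If `r, s` are the roots of `q x² − λ x + 1`, then `rs = q⁻¹` and `r + s = q⁻¹λ`, so `β²` satisfies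
the order-three recurrence with characteristic roots `r², rs, s²`; since `r² + rs + s² = q⁻¹(q⁻¹λ² − 1)`,
the factor in front of `X²·S` is its characteristic polynomial reversed in `Y`. Multiplying by it
therefore kills every coefficient of `XⁱYʲ` with `j ≥ 3`, and the remaining ones are read off directly.
-/

/-- The formal power series in two variables `X = X 0`, `Y = X 1` over `ℝ` with coefficient
`f a b` on `Xᵃ·Yᵇ`. -/
def mk2 (f : ℕ → ℕ → ℝ) : MvPowerSeries (Fin 2) ℝ := fun m => f (m 0) (m 1)

open MvPowerSeries Finsupp

theorem MvPowerSeries.coeff_X_pow_mul_eq_ite {σ R : Type*} [CommSemiring R]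
    (m : σ →₀ ℕ) (s : σ) (n : ℕ) (φ : MvPowerSeries σ R) :
    coeff m (X s ^ n * φ) = if n ≤ m s then coeff (m - single s n) φ else 0 := by
  simp only [X_pow_eq, coeff_monomial_mul, one_mul, single_le_iff]

theorem MvPowerSeries.coeff_X_mul_eq_ite {σ R : Type*} [CommSemiring R]
    (m : σ →₀ ℕ) (s : σ) (φ : MvPowerSeries σ R) :
    coeff m (X s * φ) = if 1 ≤ m s then coeff (m - single s 1) φ else 0 := by
  rw [← coeff_X_pow_mul_eq_ite, pow_one]

theorem coeff_mk2 (f : ℕ → ℕ → ℝ) (m : Fin 2 →₀ ℕ) : coeff m (mk2 f) = f (m 0) (m 1) := rfl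

theorem sq_recurrence_of_recurrence {K : Type*} [Field K] {q lam : K} (hq : q ≠ 0) {β : ℕ → K}
    (hrec : ∀ k, q * β (k + 2) - lam * β (k + 1) + β k = 0) (k : ℕ) :
    β (k + 3) ^ 2 - (q⁻¹ * lam ^ 2 - 1) * q⁻¹ * β (k + 2) ^ 2 +
      (q⁻¹ * lam ^ 2 - 1) * q⁻¹ ^ 2 * β (k + 1) ^ 2 - q⁻¹ ^ 3 * β k ^ 2 = 0 := by
  have cleared : q ^ 3 * β (k + 3) ^ 2 - q * (lam ^ 2 - q) * β (k + 2) ^ 2 +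
      (lam ^ 2 - q) * β (k + 1) ^ 2 - β k ^ 2 = 0 := by
    linear_combination (q * (q * β (k + 3) + lam * β (k + 2) - β (k + 1))) * hrec (k + 1) -
      (β k + lam * β (k + 1) - q * β (k + 2)) * hrec k
  field_simp
  linear_combination cleared

/-- assume moreover `β(0) = 1`. With `S = Σ_{k,u≥0} β(k+u+1)²XᵏYᵘ` and
`B₀(X) = Σ_{l≥0} β(l)²Xˡ`,
`(1 − (q⁻¹λ² − 1)q⁻¹Y + (q⁻¹λ² − 1)q⁻²Y² − q⁻³Y³)·X²·S
  = B₀(X)·(Y + X + q⁻¹XY − q⁻²λ²XY + q⁻³X²Y²) − (X + Y + β(1)²XY + q⁻¹XY − q⁻²λ²XY)`. -/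
theorem stmt11 (q lam : ℝ) (hq : q ≠ 0) (β : ℕ → ℝ)
    (hrec : ∀ k : ℕ, q * β (k + 2) - lam * β (k + 1) + β k = 0) (hβ0 : β 0 = 1) :
    (1 - MvPowerSeries.C (σ := Fin 2) (R := ℝ) ((q⁻¹ * lam ^ 2 - 1) * q⁻¹) * MvPowerSeries.X 1 +
        MvPowerSeries.C (σ := Fin 2) (R := ℝ) ((q⁻¹ * lam ^ 2 - 1) * q⁻¹ ^ 2) * MvPowerSeries.X 1 ^ 2 -
        MvPowerSeries.C (σ := Fin 2) (R := ℝ) (q⁻¹ ^ 3) * MvPowerSeries.X 1 ^ 3) *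
      MvPowerSeries.X 0 ^ 2 * mk2 (fun k u => β (k + u + 1) ^ 2) =
    mk2 (fun l b => if b = 0 then β l ^ 2 else 0) *
        (MvPowerSeries.X 1 + MvPowerSeries.X 0 +
          MvPowerSeries.C (σ := Fin 2) (R := ℝ) q⁻¹ * (MvPowerSeries.X 0 * MvPowerSeries.X 1) -
          MvPowerSeries.C (σ := Fin 2) (R := ℝ) (q⁻¹ ^ 2 * lam ^ 2) *
            (MvPowerSeries.X 0 * MvPowerSeries.X 1) +
          MvPowerSeries.C (σ := Fin 2) (R := ℝ) (q⁻¹ ^ 3) *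
            (MvPowerSeries.X 0 ^ 2 * MvPowerSeries.X 1 ^ 2)) -
      (MvPowerSeries.X 0 + MvPowerSeries.X 1 +
        MvPowerSeries.C (σ := Fin 2) (R := ℝ) (β 1 ^ 2) * (MvPowerSeries.X 0 * MvPowerSeries.X 1) +
        MvPowerSeries.C (σ := Fin 2) (R := ℝ) q⁻¹ * (MvPowerSeries.X 0 * MvPowerSeries.X 1) -
        MvPowerSeries.C (σ := Fin 2) (R := ℝ) (q⁻¹ ^ 2 * lam ^ 2) *
          (MvPowerSeries.X 0 * MvPowerSeries.X 1)) := by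
  have hsq := sq_recurrence_of_recurrence hq hrec
  -- put every monomial to the left of a series, so that its coefficients are shifts
  rw [mul_comm (mk2 _), ← mul_one (X 0 + X 1 + _ + _ - _)]
  ext m
  simp only [sub_mul, add_mul, one_mul, mul_assoc, map_sub, map_add, coeff_C_mul,
    coeff_X_pow_mul_eq_ite, coeff_X_mul_eq_ite, coeff_one, coeff_mk2, Finsupp.ext_iff,
    Fin.forall_fin_two, tsub_apply, single_apply, Fin.isValue, Fin.reduceEq, if_true, if_false,
    coe_zero, Pi.zero_apply, tsub_zero]
  generalize m 0 = i, m 1 = j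
  rcases i with _ | _ | i <;> rcases j with _ | _ | _ | j <;> simp [hβ0]
  · ring
  · linear_combination hsq i
  · rw [show i + (j + 3) + 1 = i + j + 1 + 3 by omega,
      show i + (j + 2) + 1 = i + j + 1 + 2 by omega]
    linear_combination hsq (i + j + 1)
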